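/- For all countable ordinals α and γ with α < γ, and every finite type σ over Ω, Iter_α^σ ≤hp Iter_γ^σ. -/

import Mathlib

/-!  Framework: finite type structure over Ω = countable ordinals,
     limsup/liminf, transfinite iteration functionals, hereditarily
     positive and hereditarily monotone functionals. -/

noncomputable section
namespace IterOrd

open Ordinal

theorem omega1_pos : (0 : Ordinal) < ω₁ := Ordinal.omega0_pos.trans Ordinal.omega0_lt_omega_one

/-- `Om` is Ω, the set of countable ordinals (ordinals `< ω₁`). -/
abbrev Om : Type 1 := {o : Ordinal // o < ω₁}

/-- Infimum of a subset of Ω (the minimum for nonempty sets; `0` for `∅`). -/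
def infOm (s : Set Om) : Om :=
  ⟨sInf (Subtype.val '' s), by
    rcases (Subtype.val '' s).eq_empty_or_nonempty with h | h
    · rw [h]; simpa using omega1_pos
    · obtain ⟨x, _, he⟩ := csInf_mem h
      exact he ▸ x.2⟩

/-- Supremum of a subset of Ω.  Whenever the supremum of the set exists in Ω
(in particular for every countable subset, by regularity of `ω₁`) this is the
genuine supremum; otherwise it takes a junk value. -/
def supOm (s : Set Om) : Om :=
  if h : sSup (Subtype.val '' s) < ω₁ then ⟨sSup (Subtype.val '' s), h⟩ else ⟨0, omega1_pos⟩

/-- Finite types over the base type `o` (interpreted as Ω). -/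
inductive Ty : Type
  | base : Ty
  | arrow : Ty → Ty → Ty
deriving DecidableEq

/-- The full type structure over Ω: `El base = Ω` and
`El (arrow σ τ)` is the set of all functions `El σ → El τ`. -/
@[reducible] def El : Ty → Type 1
  | .base => Om
  | .arrow σ τ => El σ → El τ

/-- The order on each `El σ`: the ordinal order at base type, pointwise at arrow types. -/
def Le : (σ : Ty) → El σ → El σ → Prop
  | .base => fun x y => x ≤ y
  | .arrow σ τ => fun f g => ∀ x : El σ, Le τ (f x) (g x)

/-- Suprema, computed pointwise at function types. -/
def supEl : (σ : Ty) → Set (El σ) → El σ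
  | .base => supOm
  | .arrow σ τ => fun S (x : El σ) => supEl τ ((fun f : El (.arrow σ τ) => f x) '' S)

/-- Infima, computed pointwise at function types. -/
def infEl : (σ : Ty) → Set (El σ) → El σ
  | .base => infOm
  | .arrow σ τ => fun S (x : El σ) => infEl τ ((fun f : El (.arrow σ τ) => f x) '' S)

/-- `limsup_{ξ→ζ} f ξ = inf_{γ<ζ} sup_{γ≤ξ<ζ} f ξ`. -/
def limsupEl (σ : Ty) (ζ : Ordinal) (f : ∀ ξ : Ordinal, ξ < ζ → El σ) : El σ :=
  infEl σ {y | ∃ γ, ∃ _ : γ < ζ, y = supEl σ {z | ∃ ξ, ∃ h : ξ < ζ, γ ≤ ξ ∧ z = f ξ h}}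

/-- `liminf_{ξ→ζ} f ξ = sup_{γ<ζ} inf_{γ≤ξ<ζ} f ξ`. -/
def liminfEl (σ : Ty) (ζ : Ordinal) (f : ∀ ξ : Ordinal, ξ < ζ → El σ) : El σ :=
  supEl σ {y | ∃ γ, ∃ _ : γ < ζ, y = infEl σ {z | ∃ ξ, ∃ h : ξ < ζ, γ ≤ ξ ∧ z = f ξ h}}

/-- `limsup` of a ζ-indexed sequence of ordinals. -/
def oLimsup (ζ : Ordinal) (a : Ordinal → Ordinal) : Ordinal :=
  sInf {s | ∃ γ, γ < ζ ∧ s = sSup (a '' {ξ | γ ≤ ξ ∧ ξ < ζ})}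

/-- `liminf` of a ζ-indexed sequence of ordinals. -/
def oLiminf (ζ : Ordinal) (a : Ordinal → Ordinal) : Ordinal :=
  sSup {s | ∃ γ, γ < ζ ∧ s = sInf (a '' {ξ | γ ≤ ξ ∧ ξ < ζ})}

/-- The α-iteration functional of type σ:
`Iter 0 f x = x`, `Iter (α+1) f x = f (Iter α f x)`, and
`Iter μ f x = limsup_{ξ→μ} Iter ξ f x` for limit μ. -/
def Iter (σ : Ty) (α : Ordinal) : (El σ → El σ) → El σ → El σ :=
  Ordinal.limitRecOn (motive := fun _ => (El σ → El σ) → El σ → El σ) α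
    (fun _ x => x)
    (fun _ ih f x => f (ih f x))
    (fun μ _ ih f x => limsupEl σ μ (fun ξ h => ih ξ h f x))

/-- The pair (hereditarily positive, ≤hp), defined simultaneously by recursion on the type.
Every element of `Ω` and of `Ω_{ρ→τ}` with `ρ ≠ τ` is h.p., and `≤hp` there is `≤`;
`f : Ω_{τ→τ}` is h.p. iff it preserves h.p., is inflationary on h.p. arguments and is
monotone (w.r.t. `≤hp`) on h.p. arguments; `f ≤hp f'` on `Ω_{τ→τ}` iff `f x ≤hp f' x`
for every h.p. `x`. -/
def HPaux : (σ : Ty) → (El σ → Prop) × (El σ → El σ → Prop)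
  | .base => ⟨fun _ => True, fun x y => x ≤ y⟩
  | .arrow ρ τ =>
      ⟨fun f =>
        if h : ρ = τ then
          (∀ x, (HPaux ρ).1 x → (HPaux τ).1 (f x)) ∧
          (∀ x, (HPaux ρ).1 x → (HPaux τ).2 (cast (congrArg El h) x) (f x)) ∧
          (∀ x y, (HPaux ρ).1 x → (HPaux ρ).1 y → (HPaux ρ).2 x y → (HPaux τ).2 (f x) (f y))
        else True,
       fun f g =>
        if ρ = τ then ∀ x, (HPaux ρ).1 x → (HPaux τ).2 (f x) (g x)
        else Le (.arrow ρ τ) f g⟩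

/-- Hereditarily positive functionals. -/
def Hp (σ : Ty) : El σ → Prop := (HPaux σ).1

/-- The order `≤hp`. -/
def HpLe (σ : Ty) : El σ → El σ → Prop := (HPaux σ).2

/-- `f =hp g` iff `f ≤hp g` and `g ≤hp f`. -/
def HpEq (σ : Ty) (f g : El σ) : Prop := HpLe σ f g ∧ HpLe σ g f

/-- The pair (hereditarily monotone, ≤ on the hereditarily monotone structure),
by recursion on the type.  `f` is hereditarily monotone iff it maps hereditarily
monotone arguments to hereditarily monotone values, monotonically; the order is
pointwise over hereditarily monotone arguments (i.e. the order of `Ω^mon`). -/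
def HMaux : (σ : Ty) → (El σ → Prop) × (El σ → El σ → Prop)
  | .base => ⟨fun _ => True, fun x y => x ≤ y⟩
  | .arrow σ τ =>
      ⟨fun f =>
        (∀ x, (HMaux σ).1 x → (HMaux τ).1 (f x)) ∧
        (∀ x y, (HMaux σ).1 x → (HMaux σ).1 y → (HMaux σ).2 x y → (HMaux τ).2 (f x) (f y)),
       fun f g => ∀ x, (HMaux σ).1 x → (HMaux τ).2 (f x) (g x)⟩

/-- Hereditarily monotone functionals: the members of the type structure `Ω^mon`. -/
def HM (σ : Ty) : El σ → Prop := (HMaux σ).1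

/-- The (pointwise) order of the hereditarily monotone type structure `Ω^mon`. -/
def LeHM (σ : Ty) : El σ → El σ → Prop := (HMaux σ).2

/-- Equality in the hereditarily monotone type structure `Ω^mon`. -/
def EqHM (σ : Ty) (f g : El σ) : Prop := LeHM σ f g ∧ LeHM σ g f
/-! For h.p. `f` and h.p. `x`, the transfinite sequence `ξ ↦ Iter_ξ f x` stays h.p. and is
`≤hp`-increasing: at successor stages because h.p. functionals are inflationary, at limit
stages because `Iter_α f x` lies below every tail supremum beyond `α`, hence below their
infimum. What makes the limit stages work is that h.p. elements are closed under infima and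
countable suprema, with `≤hp` respecting both; the suprema are genuine because below `ω₁`
every index set is countable. -/

open Set

lemma sSup_lt_omega_one {s : Set Ordinal} (hs : s.Countable) (h : ∀ x ∈ s, x < ω₁) :
    sSup s < ω₁ := by
  have := hs.to_subtype
  rw [sSup_eq_iSup']
  exact Ordinal.iSup_lt_omega_one fun x => h x x.2

lemma countable_Iio_of_lt_omega_one {γ : Ordinal} (h : γ < ω₁) : (Iio γ).Countable := by
  rw [← Cardinal.le_aleph0_iff_set_countable, Cardinal.mk_Iio_ordinal, Cardinal.lift_le_aleph0,
    ← Cardinal.lt_aleph_one_iff, ← Cardinal.lt_ord, Cardinal.ord_aleph]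
  exact h

lemma countable_setOf_lt_omega_one {β : Type*} {μ : Ordinal} (hμ : μ < ω₁) (P : Ordinal → Prop)
    (F : ∀ ξ, ξ < μ → β) : {z | ∃ ξ, ∃ h : ξ < μ, P ξ ∧ z = F ξ h}.Countable := by
  have := (countable_Iio_of_lt_omega_one hμ).to_subtype
  refine (countable_range fun ξ : Iio μ => F ξ.1 ξ.2).mono ?_
  rintro z ⟨ξ, hξ, -, rfl⟩
  exact ⟨⟨ξ, hξ⟩, rfl⟩

lemma le_supOm {S : Set Om} (hS : S.Countable) {x : Om} (hx : x ∈ S) : x ≤ supOm S := by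
  have hbdd : ∀ a ∈ Subtype.val '' S, a < ω₁ := by
    rintro _ ⟨y, -, rfl⟩
    exact y.2
  rw [supOm, dif_pos (sSup_lt_omega_one (hS.image _) hbdd)]
  exact Subtype.coe_le_coe.mp
    (le_csSup ⟨ω₁, fun a ha => (hbdd a ha).le⟩ (mem_image_of_mem _ hx))

lemma supOm_le {S : Set Om} {b : Om} (h : ∀ y ∈ S, y ≤ b) : supOm S ≤ b := by
  rw [supOm]
  split
  · exact Subtype.coe_le_coe.mp (csSup_le' (by rintro _ ⟨y, hy, rfl⟩; exact h y hy))
  · exact Subtype.coe_le_coe.mp zero_le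

lemma infOm_le {S : Set Om} {x : Om} (hx : x ∈ S) : infOm S ≤ x :=
  Subtype.coe_le_coe.mp (csInf_le (OrderBot.bddBelow _) (mem_image_of_mem _ hx))

lemma le_infOm {S : Set Om} {b : Om} (hS : S.Nonempty) (h : ∀ y ∈ S, b ≤ y) : b ≤ infOm S :=
  Subtype.coe_le_coe.mp (le_csInf (hS.image _) (by rintro _ ⟨y, hy, rfl⟩; exact h y hy))

lemma Le.refl : ∀ (σ : Ty) (x : El σ), Le σ x x
  | .base, _ => le_rfl
  | .arrow _ τ, f => fun x => Le.refl τ (f x)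

lemma Le.trans : ∀ {σ : Ty} {x y z : El σ}, Le σ x y → Le σ y z → Le σ x z
  | .base, _, _, _, h₁, h₂ => le_trans h₁ h₂
  | .arrow _ τ, _, _, _, h₁, h₂ => fun x => Le.trans (σ := τ) (h₁ x) (h₂ x)

lemma le_supEl : ∀ {σ : Ty} {S : Set (El σ)}, S.Countable → ∀ {x : El σ}, x ∈ S →
    Le σ x (supEl σ S)
  | .base, _, hS, _, hx => le_supOm hS hx
  | .arrow _ τ, _, hS, _, hx => fun _ => le_supEl (σ := τ) (hS.image _) (mem_image_of_mem _ hx)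

lemma supEl_le : ∀ {σ : Ty} {S : Set (El σ)} {b : El σ}, (∀ y ∈ S, Le σ y b) →
    Le σ (supEl σ S) b
  | .base, _, _, h => supOm_le h
  | .arrow _ τ, _, _, h => fun a => supEl_le (σ := τ) (by rintro _ ⟨g, hg, rfl⟩; exact h g hg a)

lemma infEl_le : ∀ {σ : Ty} {S : Set (El σ)} {x : El σ}, x ∈ S → Le σ (infEl σ S) x
  | .base, _, _, hx => infOm_le hx
  | .arrow _ τ, _, _, hx => fun _ => infEl_le (σ := τ) (mem_image_of_mem _ hx)

lemma le_infEl : ∀ {σ : Ty} {S : Set (El σ)} {b : El σ}, S.Nonempty →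
    (∀ y ∈ S, Le σ b y) → Le σ b (infEl σ S)
  | .base, _, _, hS, h => le_infOm hS h
  | .arrow _ τ, _, _, hS, h => fun a =>
      le_infEl (σ := τ) (hS.image _) (by rintro _ ⟨g, hg, rfl⟩; exact h g hg a)

lemma hp_arrow_of_ne {ρ τ : Ty} (h : ρ ≠ τ) (f : El (.arrow ρ τ)) : Hp (.arrow ρ τ) f := by
  simp [Hp, HPaux, h]

lemma hpLe_arrow_iff_of_ne {ρ τ : Ty} (h : ρ ≠ τ) {f g : El (.arrow ρ τ)} :
    HpLe (.arrow ρ τ) f g ↔ Le (.arrow ρ τ) f g := by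
  simp [HpLe, HPaux, h]

lemma hpLe_arrow_self_iff {τ : Ty} {f g : El (.arrow τ τ)} :
    HpLe (.arrow τ τ) f g ↔ ∀ x, Hp τ x → HpLe τ (f x) (g x) := by
  simp [HpLe, HPaux, Hp]

lemma hp_arrow_self_iff {τ : Ty} {f : El (.arrow τ τ)} :
    Hp (.arrow τ τ) f ↔
      (∀ x, Hp τ x → Hp τ (f x)) ∧ (∀ x, Hp τ x → HpLe τ x (f x)) ∧
      (∀ x y, Hp τ x → Hp τ y → HpLe τ x y → HpLe τ (f x) (f y)) := by
  simp [Hp, HPaux, HpLe]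

lemma Le.hpLe : ∀ {σ : Ty} {x y : El σ}, Le σ x y → HpLe σ x y
  | .base, _, _, h => h
  | .arrow ρ τ, _, _, h => by
    by_cases hρτ : ρ = τ
    · subst hρτ
      exact hpLe_arrow_self_iff.mpr fun x _ => Le.hpLe (h x)
    · exact (hpLe_arrow_iff_of_ne hρτ).mpr h

lemma HpLe.refl {σ : Ty} (x : El σ) : HpLe σ x x := (Le.refl σ x).hpLe

lemma HpLe.trans : ∀ {σ : Ty} {x y z : El σ}, HpLe σ x y → HpLe σ y z → HpLe σ x z
  | .base, _, _, _, h₁, h₂ => le_trans h₁ h₂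
  | .arrow ρ τ, _, _, _, h₁, h₂ => by
    by_cases hρτ : ρ = τ
    · subst hρτ
      rw [hpLe_arrow_self_iff] at h₁ h₂ ⊢
      exact fun x hx => (h₁ x hx).trans (h₂ x hx)
    · rw [hpLe_arrow_iff_of_ne hρτ] at h₁ h₂ ⊢
      exact h₁.trans h₂

lemma hpLe_infEl : ∀ {σ : Ty} {S : Set (El σ)} {b : El σ}, S.Nonempty →
    (∀ y ∈ S, HpLe σ b y) → HpLe σ b (infEl σ S)
  | .base, _, _, hS, h => le_infOm hS h
  | .arrow ρ τ, S, _, hS, h => by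
    by_cases hρτ : ρ = τ
    · subst hρτ
      refine hpLe_arrow_self_iff.mpr fun x hx => hpLe_infEl (hS.image _) ?_
      rintro _ ⟨g, hg, rfl⟩
      exact hpLe_arrow_self_iff.mp (h g hg) x hx
    · exact (hpLe_arrow_iff_of_ne hρτ).mpr
        (le_infEl hS fun y hy => (hpLe_arrow_iff_of_ne hρτ).mp (h y hy))

lemma supEl_hpLe : ∀ {σ : Ty} {S : Set (El σ)} {b : El σ},
    (∀ y ∈ S, HpLe σ y b) → HpLe σ (supEl σ S) b
  | .base, _, _, h => supOm_le h
  | .arrow ρ τ, S, _, h => by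
    by_cases hρτ : ρ = τ
    · subst hρτ
      refine hpLe_arrow_self_iff.mpr fun x hx => supEl_hpLe ?_
      rintro _ ⟨g, hg, rfl⟩
      exact hpLe_arrow_self_iff.mp (h g hg) x hx
    · exact (hpLe_arrow_iff_of_ne hρτ).mpr
        (supEl_le fun y hy => (hpLe_arrow_iff_of_ne hρτ).mp (h y hy))

lemma hp_infEl : ∀ {σ : Ty} {S : Set (El σ)}, S.Nonempty → (∀ y ∈ S, Hp σ y) →
    Hp σ (infEl σ S)
  | .base, _, _, _ => trivial
  | .arrow ρ τ, S, hS, h => by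
    by_cases hρτ : ρ = τ
    · subst hρτ
      have hpS := fun g (hg : g ∈ S) => hp_arrow_self_iff.mp (h g hg)
      refine hp_arrow_self_iff.mpr ⟨fun x hx => ?_, fun x hx => ?_, fun x y hx hy hxy => ?_⟩
      · refine hp_infEl (hS.image _) ?_
        rintro _ ⟨g, hg, rfl⟩
        exact (hpS g hg).1 x hx
      · refine hpLe_infEl (hS.image _) ?_
        rintro _ ⟨g, hg, rfl⟩
        exact (hpS g hg).2.1 x hx
      · refine hpLe_infEl (hS.image _) ?_
        rintro _ ⟨g, hg, rfl⟩
        exact (infEl_le (mem_image_of_mem _ hg)).hpLe.trans ((hpS g hg).2.2 x y hx hy hxy)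
    · exact hp_arrow_of_ne hρτ _

lemma hp_supEl : ∀ {σ : Ty} {S : Set (El σ)}, S.Countable → S.Nonempty →
    (∀ y ∈ S, Hp σ y) → Hp σ (supEl σ S)
  | .base, _, _, _, _ => trivial
  | .arrow ρ τ, S, hSc, hS, h => by
    by_cases hρτ : ρ = τ
    · subst hρτ
      have hpS := fun g (hg : g ∈ S) => hp_arrow_self_iff.mp (h g hg)
      have le_sup := fun x g (hg : g ∈ S) =>
        (le_supEl (hSc.image (· x)) (mem_image_of_mem _ hg)).hpLe
      refine hp_arrow_self_iff.mpr ⟨fun x hx => ?_, fun x hx => ?_, fun x y hx hy hxy => ?_⟩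
      · refine hp_supEl (hSc.image _) (hS.image _) ?_
        rintro _ ⟨g, hg, rfl⟩
        exact (hpS g hg).1 x hx
      · obtain ⟨g, hg⟩ := hS
        exact ((hpS g hg).2.1 x hx).trans (le_sup x g hg)
      · refine supEl_hpLe ?_
        rintro _ ⟨g, hg, rfl⟩
        exact ((hpS g hg).2.2 x y hx hy hxy).trans (le_sup y g hg)
    · exact hp_arrow_of_ne hρτ _

section limsup

variable {σ : Ty} {μ : Ordinal} {F : ∀ ξ, ξ < μ → El σ}

lemma hp_limsupEl (hμ₀ : 0 < μ) (hμ : μ < ω₁) (hF : ∀ ξ h, Hp σ (F ξ h)) :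
    Hp σ (limsupEl σ μ F) := by
  refine hp_infEl ⟨_, 0, hμ₀, rfl⟩ ?_
  rintro _ ⟨γ, hγ, rfl⟩
  refine hp_supEl (countable_setOf_lt_omega_one hμ _ F) ⟨_, γ, hγ, le_rfl, rfl⟩ ?_
  rintro _ ⟨ξ, hξ, -, rfl⟩
  exact hF ξ hξ

lemma hpLe_limsupEl {b : El σ} (hμ : μ < ω₁) {α : Ordinal} (hα : α < μ)
    (hF : ∀ ξ h, α ≤ ξ → HpLe σ b (F ξ h)) : HpLe σ b (limsupEl σ μ F) := by
  refine hpLe_infEl ⟨_, α, hα, rfl⟩ ?_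
  rintro _ ⟨γ, hγ, rfl⟩
  have hmax : max α γ < μ := max_lt hα hγ
  exact (hF _ hmax (le_max_left _ _)).trans
    (le_supEl (countable_setOf_lt_omega_one hμ _ F) ⟨_, hmax, le_max_right _ _, rfl⟩).hpLe

end limsup

section Iter

variable (σ : Ty) (f : El σ → El σ) (x : El σ)

lemma Iter_zero : Iter σ 0 f x = x := by
  rw [Iter, Ordinal.limitRecOn_zero]

lemma Iter_add_one (α : Ordinal) : Iter σ (α + 1) f x = f (Iter σ α f x) := by
  rw [Iter, Ordinal.limitRecOn_add_one]
  rfl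

lemma Iter_limit {μ : Ordinal} (hμ : Order.IsSuccLimit μ) :
    Iter σ μ f x = limsupEl σ μ fun ξ _ => Iter σ ξ f x := by
  rw [Iter, Ordinal.limitRecOn_limit _ _ _ _ hμ]
  rfl

variable {σ f x}

lemma hp_iter (hf : ∀ y, Hp σ y → Hp σ (f y)) (hx : Hp σ x) (α : Ordinal) (hα : α < ω₁) :
    Hp σ (Iter σ α f x) := by
  induction α using Ordinal.limitRecOn with
  | zero => rwa [Iter_zero]
  | add_one β ih =>
    rw [Iter_add_one]
    exact hf _ (ih ((lt_add_one β).trans hα))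
  | limit μ hμ ih =>
    rw [Iter_limit σ f x hμ]
    exact hp_limsupEl hμ.pos hα fun ξ hξ => ih ξ hξ (hξ.trans hα)

lemma iter_hpLe_iter_of_le (hf : ∀ y, Hp σ y → Hp σ (f y)) (hf_infl : ∀ y, Hp σ y → HpLe σ y (f y))
    (hx : Hp σ x) {α γ : Ordinal} (hαγ : α ≤ γ) (hγ : γ < ω₁) :
    HpLe σ (Iter σ α f x) (Iter σ γ f x) := by
  induction γ using Ordinal.limitRecOn generalizing α with
  | zero => rw [nonpos_iff_eq_zero.mp hαγ]; exact HpLe.refl _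
  | add_one β ih =>
    rcases hαγ.eq_or_lt with rfl | hαβ
    · exact HpLe.refl _
    have hβ : β < ω₁ := (lt_add_one β).trans hγ
    rw [Iter_add_one]
    exact (ih (Order.lt_add_one_iff.mp hαβ) hβ).trans (hf_infl _ (hp_iter hf hx β hβ))
  | limit μ hμ ih =>
    rcases hαγ.eq_or_lt with rfl | hαμ
    · exact HpLe.refl _
    rw [Iter_limit σ f x hμ]
    exact hpLe_limsupEl hγ hαμ fun ξ hξ hαξ => ih ξ hξ hαξ (hξ.trans hγ)

end Iter

/-- For countable ordinals `α < γ` and every finite type `σ`,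
`Iter_α^σ ≤hp Iter_γ^σ`. -/
theorem iter_hpLe_iter (α γ : Ordinal) (h : α < γ) (hγ : γ < ω₁) (σ : Ty) :
    HpLe (.arrow (.arrow σ σ) (.arrow σ σ)) (Iter σ α) (Iter σ γ) := by
  refine hpLe_arrow_self_iff.mpr fun f hf => hpLe_arrow_self_iff.mpr fun x hx => ?_
  obtain ⟨hf_hp, hf_infl, -⟩ := hp_arrow_self_iff.mp hf
  exact iter_hpLe_iter_of_le hf_hp hf_infl hx h.le hγ

end IterOrd
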